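/- Fix integers $L \ge 2$ and a parameter $K \ge 2^{16 L^2}$. With $x_\ell = K^{8^{L-\ell-1}}$, $n_\ell = K^{4 \cdot 8^{L-\ell-1}}$, $\Delta_\ell = 2^{4\sqrt{K} (x_0 \cdots x_{\ell-2})(n_1 \cdots n_{L-1})}$ for $\ell \in [2, L]$, and $\Theta_\ell = 8^{-L\ell} (x_0 \cdots x_\ell)(n_1 \cdots n_{\ell-1})$ for $\ell \in [1, L-1]$, the following inequality holds for all $\ell \in [2, L-1]$: $\Delta_\ell^2 \le 2^{8^{-L\ell} \cdot n_{\ell-1} (x_0 \cdots x_{\ell-1})(n_1 \cdots n_{\ell-2})} \le 2^{n_{\ell-1} \Theta_{\ell-1}}$. -/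

import Mathlib

/-!
Write `ℓ = k + 2`. Both sides of the first inequality contain `x₀ ⋯ x_k · n₁ ⋯ n_k · n_{k+1}`, so
after cancelling it reduces to `2 · 8^{Lℓ} · 4 √K · n_{k+2} ⋯ n_{L-1} ≤ x_{k+1}`. The tail
product is `K^{4(8^m - 1)/7}` with `m = L - k - 2 ≥ 1`, while `x_{k+1} = K^{8^m}`; the
assumption on `K` gives `8^{Lℓ} · 8 ≤ K` and `√K ≤ K`, and `2 + 4(8^m - 1)/7 ≤ 8^m`.
The second inequality only uses that `8^{-Lℓ}` decreases in `ℓ`.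
-/

open Finset

theorem two_add_four_mul_geomSum_eight_le {m : ℕ} (hm : 1 ≤ m) :
    2 + 4 * ∑ j ∈ range m, 8 ^ j ≤ 8 ^ m := by
  have hgeom := geom_sum_mul_add 7 m
  have h8 : 8 ≤ 8 ^ m := Nat.le_self_pow (by omega) 8
  norm_num at hgeom
  omega

theorem sum_Ico_eight_pow_sub (a L : ℕ) :
    ∑ i ∈ Ico a L, 8 ^ (L - i - 1) = ∑ j ∈ range (L - a), 8 ^ j := by
  rcases L with _ | L
  · simp
  have h := sum_Ico_reflect (fun j => 8 ^ j) a (n := L) (m := L + 1) le_rfl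
  simp only [Nat.sub_self, ← range_eq_Ico] at h
  rw [← h]
  exact sum_congr rfl fun i _ => by rw [Nat.sub_right_comm, Nat.add_sub_cancel]

theorem eight_pow_mul_mul_eight_le {L ℓ : ℕ} (hL : 1 ≤ L) (hℓ : ℓ ≤ L) :
    8 ^ (L * ℓ) * 8 ≤ 2 ^ (16 * L ^ 2) := by
  rw [show (8 : ℕ) = 2 ^ 3 by rfl, ← pow_mul, ← pow_add]
  exact Nat.pow_le_pow_right (by omega) (by nlinarith)

theorem prod_Icc_one_sub_one_eq {M : Type*} [CommMonoid M] (f : ℕ → M) {k L : ℕ} (h : k + 2 ≤ L) :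
    ∏ i ∈ Icc 1 (L - 1), f i = (∏ i ∈ Icc 1 k, f i) * f (k + 1) * ∏ i ∈ Ico (k + 2) L, f i := by
  obtain ⟨M, rfl⟩ : ∃ M, L = M + 1 := ⟨L - 1, by omega⟩
  rw [Nat.add_sub_cancel, ← Ico_add_one_right_eq_Icc, ← Ico_add_one_right_eq_Icc,
    ← prod_Ico_consecutive f (show 1 ≤ k + 2 by omega) h, prod_Ico_succ_top (by omega)]

theorem sq_mul_prod_Ico_pow_le {R : Type*} [CommSemiring R] [PartialOrder R] [IsOrderedRing R]
    {K : R} (hK : 1 ≤ K) {a L : ℕ} (haL : a < L) :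
    K ^ 2 * ∏ i ∈ Ico a L, K ^ (4 * 8 ^ (L - i - 1)) ≤ K ^ 8 ^ (L - a) := by
  rw [prod_pow_eq_pow_sum, ← mul_sum, sum_Ico_eight_pow_sub, ← pow_add]
  exact pow_le_pow_right₀ hK (two_add_four_mul_geomSum_eight_le (by omega))

theorem eight_pow_mul_sqrt_mul_prod_Ico_le {L K k : ℕ} (hkL : k + 3 ≤ L) (hK : 2 ^ (16 * L ^ 2) ≤ K)
    {x nn : ℕ → ℕ} (hx : ∀ ℓ, x ℓ = K ^ (8 ^ (L - ℓ - 1)))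
    (hn : ∀ ℓ, nn ℓ = K ^ (4 * 8 ^ (L - ℓ - 1))) :
    8 ^ (L * (k + 2)) * 8 * √K * ∏ i ∈ Ico (k + 2) L, (nn i : ℝ) ≤ x (k + 1) := by
  have hK8 : (8 : ℝ) ^ (L * (k + 2)) * 8 ≤ K := by
    exact_mod_cast (eight_pow_mul_mul_eight_le (by omega) (by omega)).trans hK
  have hK1 : (1 : ℝ) ≤ K := by exact_mod_cast Nat.one_le_two_pow.trans hK
  have hsqrt : √(K : ℝ) ≤ K := Real.sqrt_le_left (by linarith) |>.mpr (by nlinarith)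
  calc 8 ^ (L * (k + 2)) * 8 * √K * ∏ i ∈ Ico (k + 2) L, (nn i : ℝ)
      ≤ K * K * ∏ i ∈ Ico (k + 2) L, (K : ℝ) ^ (4 * 8 ^ (L - i - 1)) := by
        simp only [hn, Nat.cast_pow]
        gcongr
    _ ≤ (K : ℝ) ^ 8 ^ (L - (k + 2)) := by
        rw [← sq]
        exact sq_mul_prod_Ico_pow_le hK1 (by omega)
    _ = x (k + 1) := by
        rw [hx, Nat.cast_pow]
        congr 2

theorem two_mul_entropy_exponent_le {L K k : ℕ} (hkL : k + 3 ≤ L) (hK : 2 ^ (16 * L ^ 2) ≤ K)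
    {x nn : ℕ → ℕ} (hx : ∀ ℓ, x ℓ = K ^ (8 ^ (L - ℓ - 1)))
    (hn : ∀ ℓ, nn ℓ = K ^ (4 * 8 ^ (L - ℓ - 1))) :
    2 * (4 * √K * (∏ i ∈ range (k + 1), (x i : ℝ)) * ∏ i ∈ Icc 1 (L - 1), (nn i : ℝ)) ≤
      (8 : ℝ) ^ (-((L * (k + 2) : ℕ) : ℝ)) * nn (k + 1) * (∏ i ∈ range (k + 2), (x i : ℝ)) *
        ∏ i ∈ Icc 1 k, (nn i : ℝ) := by
  set P : ℝ := 8 ^ (L * (k + 2))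
  have hP : 0 < P := by positivity
  rw [prod_Icc_one_sub_one_eq (k := k) _ (by omega), prod_range_succ _ (k + 1),
    Real.rpow_neg (by norm_num), Real.rpow_natCast]
  calc 2 * (4 * √K * (∏ i ∈ range (k + 1), (x i : ℝ)) *
        ((∏ i ∈ Icc 1 k, (nn i : ℝ)) * nn (k + 1) * ∏ i ∈ Ico (k + 2) L, (nn i : ℝ)))
      = P⁻¹ * (P * 8 * √K * ∏ i ∈ Ico (k + 2) L, (nn i : ℝ)) *
          (nn (k + 1) * (∏ i ∈ range (k + 1), (x i : ℝ)) * ∏ i ∈ Icc 1 k, (nn i : ℝ)) := by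
        field_simp
        ring
    _ ≤ P⁻¹ * x (k + 1) *
          (nn (k + 1) * (∏ i ∈ range (k + 1), (x i : ℝ)) * ∏ i ∈ Icc 1 k, (nn i : ℝ)) := by
        gcongr
        exact eight_pow_mul_sqrt_mul_prod_Ico_le hkL hK hx hn
    _ = _ := by ring

theorem stmt_9_general (L : ℕ) (K : ℕ) (hK : 2 ^ (16 * L ^ 2) ≤ K)
    (x nn : ℕ → ℕ)
    (hx : ∀ ℓ, x ℓ = K ^ (8 ^ (L - ℓ - 1)))
    (hn : ∀ ℓ, nn ℓ = K ^ (4 * 8 ^ (L - ℓ - 1)))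
    (Δ Θ : ℕ → ℝ)
    (hΔ : ∀ ℓ, Δ ℓ = (2 : ℝ) ^ (4 * Real.sqrt K *
      (∏ i ∈ Finset.range (ℓ - 1), (x i : ℝ)) * (∏ i ∈ Finset.Icc 1 (L - 1), (nn i : ℝ))))
    (hΘ : ∀ ℓ, Θ ℓ = (8 : ℝ) ^ (-((L * ℓ : ℕ) : ℝ)) *
      (∏ i ∈ Finset.range (ℓ + 1), (x i : ℝ)) * (∏ i ∈ Finset.Icc 1 (ℓ - 1), (nn i : ℝ))) :
    ∀ ℓ ∈ Finset.Icc 2 (L - 1),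
      (Δ ℓ) ^ 2 ≤ (2 : ℝ) ^ ((8 : ℝ) ^ (-((L * ℓ : ℕ) : ℝ)) * (nn (ℓ - 1) : ℝ) *
          (∏ i ∈ Finset.range ℓ, (x i : ℝ)) * (∏ i ∈ Finset.Icc 1 (ℓ - 2), (nn i : ℝ)))
      ∧ (2 : ℝ) ^ ((8 : ℝ) ^ (-((L * ℓ : ℕ) : ℝ)) * (nn (ℓ - 1) : ℝ) *
          (∏ i ∈ Finset.range ℓ, (x i : ℝ)) * (∏ i ∈ Finset.Icc 1 (ℓ - 2), (nn i : ℝ)))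
        ≤ (2 : ℝ) ^ ((nn (ℓ - 1) : ℝ) * Θ (ℓ - 1)) := by
  intro ℓ hℓ
  obtain ⟨hℓ2, hℓL⟩ := mem_Icc.mp hℓ
  obtain ⟨k, rfl⟩ : ∃ k, ℓ = k + 2 := ⟨ℓ - 2, by omega⟩
  rw [hΔ, hΘ, show k + 2 - 1 = k + 1 from rfl, show k + 2 - 2 = k from rfl,
    show k + 1 - 1 = k from rfl, show k + 1 + 1 = k + 2 from rfl]
  refine ⟨?_, Real.rpow_le_rpow_of_exponent_le one_le_two ?_⟩
  · rw [← Real.rpow_natCast, ← Real.rpow_mul zero_le_two]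
    refine Real.rpow_le_rpow_of_exponent_le one_le_two ?_
    rw [Nat.cast_two, mul_comm]
    exact two_mul_entropy_exponent_le (by omega) hK hx hn
  · calc (8 : ℝ) ^ (-((L * (k + 2) : ℕ) : ℝ)) * nn (k + 1) * (∏ i ∈ range (k + 2), (x i : ℝ)) *
          ∏ i ∈ Icc 1 k, (nn i : ℝ)
        = (8 : ℝ) ^ (-((L * (k + 2) : ℕ) : ℝ)) *
            (nn (k + 1) * (∏ i ∈ range (k + 2), (x i : ℝ)) * ∏ i ∈ Icc 1 k, (nn i : ℝ)) := by ring
      _ ≤ (8 : ℝ) ^ (-((L * (k + 1) : ℕ) : ℝ)) *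
            (nn (k + 1) * (∏ i ∈ range (k + 2), (x i : ℝ)) * ∏ i ∈ Icc 1 k, (nn i : ℝ)) := by
        gcongr
        · norm_num
        · omega
      _ = _ := by ring

/-- Key parameter inequality relating the entropy-loss parameters `Δ_ℓ` to the
cover-size parameters `Θ_ℓ` under the doubly-exponential hierarchy in `K`:
`Δ_ℓ² ≤ 2^{8^{-Lℓ} n_{ℓ-1}(x₀⋯x_{ℓ-1})(n₁⋯n_{ℓ-2})} ≤ 2^{n_{ℓ-1} Θ_{ℓ-1}}`. -/
theorem stmt_9 (L : ℕ) (hL : 2 ≤ L) (K : ℕ) (hK : 2 ^ (16 * L ^ 2) ≤ K)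
    (x nn : ℕ → ℕ)
    (hx : ∀ ℓ, x ℓ = K ^ (8 ^ (L - ℓ - 1)))
    (hn : ∀ ℓ, nn ℓ = K ^ (4 * 8 ^ (L - ℓ - 1)))
    (Δ Θ : ℕ → ℝ)
    (hΔ : ∀ ℓ, Δ ℓ = (2 : ℝ) ^ (4 * Real.sqrt K *
      (∏ i ∈ Finset.range (ℓ - 1), (x i : ℝ)) * (∏ i ∈ Finset.Icc 1 (L - 1), (nn i : ℝ))))
    (hΘ : ∀ ℓ, Θ ℓ = (8 : ℝ) ^ (-((L * ℓ : ℕ) : ℝ)) *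
      (∏ i ∈ Finset.range (ℓ + 1), (x i : ℝ)) * (∏ i ∈ Finset.Icc 1 (ℓ - 1), (nn i : ℝ))) :
    ∀ ℓ ∈ Finset.Icc 2 (L - 1),
      (Δ ℓ) ^ 2 ≤ (2 : ℝ) ^ ((8 : ℝ) ^ (-((L * ℓ : ℕ) : ℝ)) * (nn (ℓ - 1) : ℝ) *
          (∏ i ∈ Finset.range ℓ, (x i : ℝ)) * (∏ i ∈ Finset.Icc 1 (ℓ - 2), (nn i : ℝ)))
      ∧ (2 : ℝ) ^ ((8 : ℝ) ^ (-((L * ℓ : ℕ) : ℝ)) * (nn (ℓ - 1) : ℝ) *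
          (∏ i ∈ Finset.range ℓ, (x i : ℝ)) * (∏ i ∈ Finset.Icc 1 (ℓ - 2), (nn i : ℝ)))
        ≤ (2 : ℝ) ^ ((nn (ℓ - 1) : ℝ) * Θ (ℓ - 1)) :=
  stmt_9_general L K hK x nn hx hn Δ Θ hΔ hΘ
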